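/- Let (K, v) be a separably closed valued field of characteristic p > 0, let d ≥ 1, and let a_0, …, a_d ∈ K with a_d ≠ 0. Then the set {v(m) : m ∈ K, m ≠ 0, ∑_{i=0}^{d} a_i·m^{p^i} = 0} of valuations of nonzero roots of the additive polynomial ∑_{i=0}^{d} a_i·x^{p^i} has at most 2^{d−1} elements. -/

import Mathlib

/-!
The roots of `∑ aᵢ x^{pⁱ}` form an `𝔽_p`-subspace of `K` (each `x ↦ x^{pⁱ}` is additive and fixes
`𝔽_p`) with at most `p^d` elements, so it has dimension at most `d`. Nonzero elements with pairwise
distinct valuations are `𝔽_p`-linearly independent: `v` is trivial on `𝔽_p^×`, so in a nontrivial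
combination the term of least valuation determines the valuation of the sum, which is then not `⊤`.
Hence there are at most `d ≤ 2^{d-1}` valuations of nonzero roots.
-/

/-- A valuation on a field `K` with values in the linearly ordered abelian group `Γ`
(together with `∞ = ⊤`), surjective onto `Γ`, i.e. `Γ = v(K^×)`. -/
structure ValuedFieldAux (K : Type*) [Field K] (Γ : Type*)
    [AddCommGroup Γ] [LinearOrder Γ] [IsOrderedAddMonoid Γ] where
  v : K → WithTop Γ
  v_eq_top_iff : ∀ x : K, v x = ⊤ ↔ x = 0
  v_mul : ∀ x y : K, v (x * y) = v x + v y
  v_add : ∀ x y : K, min (v x) (v y) ≤ v (x + y)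
  v_surj : ∀ γ : Γ, ∃ x : K, v x = (γ : WithTop Γ)


open Finset Polynomial

theorem LinearIndependent.natCard_pow_le {R M ι : Type*} [Semiring R] [AddCommMonoid M]
    [Module R M] [Finite ι] [Finite M] {m : ι → M} (h : LinearIndependent R m) :
    Nat.card R ^ Nat.card ι ≤ Nat.card M := by
  have := Fintype.ofFinite ι
  rw [← Nat.card_fun]
  exact Nat.card_le_card_of_injective _
    (linearIndependent_iff_injective_fintypeLinearCombination.mp h)

namespace AddValuation

section LinearOrderedAddCommGroup

variable {R : Type*} [Ring R] {Γ : Type*} [AddCommGroup Γ] [LinearOrder Γ] [IsOrderedAddMonoid Γ]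
  (v : AddValuation R (WithTop Γ))

theorem map_eq_zero_of_pow_eq_one {x : R} {n : ℕ} (hn : n ≠ 0) (h : x ^ n = 1) : v x = 0 := by
  have hn' : n • v x = 0 := by rw [← v.map_pow, h, v.map_one]
  cases hx : v x with
  | top =>
    obtain ⟨k, rfl⟩ := Nat.exists_eq_succ_of_ne_zero hn
    simp [hx, succ_nsmul] at hn'
  | coe γ =>
    rw [hx, ← WithTop.coe_nsmul, WithTop.coe_eq_zero, nsmul_eq_zero_iff_right hn] at hn'
    rw [hn', WithTop.coe_zero]

theorem map_algebraMap_eq_zero {F : Type*} [Field F] [Finite F] [Algebra F R] {c : F}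
    (hc : c ≠ 0) : v (algebraMap F R c) = 0 := by
  have := Fintype.ofFinite F
  refine v.map_eq_zero_of_pow_eq_one (n := Fintype.card F - 1) ?_ ?_
  · have := Fintype.one_lt_card (α := F)
    omega
  · rw [← _root_.map_pow, FiniteField.pow_card_sub_one_eq_one c hc, _root_.map_one]

end LinearOrderedAddCommGroup

theorem linearIndependent_of_injective {k K Γ₀ ι : Type*} [Field k] [Field K]
    [Algebra k K] [LinearOrderedAddCommMonoidWithTop Γ₀] [Nontrivial Γ₀] (v : AddValuation K Γ₀)
    (hk : ∀ c : k, c ≠ 0 → v (algebraMap k K c) = 0) {m : ι → K} (hm : ∀ i, m i ≠ 0)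
    (hinj : Function.Injective (v ∘ m)) : LinearIndependent k m := by
  classical
  refine linearIndependent_iff'.mpr fun s g hsum => ?_
  by_contra! hne
  obtain ⟨j, hj, hjmin⟩ := (s.filter (g · ≠ 0)).exists_min_image (v ∘ m)
    (by obtain ⟨i, hi, hgi⟩ := hne; exact ⟨i, mem_filter.mpr ⟨hi, hgi⟩⟩)
  rw [mem_filter] at hj
  have hval : ∀ i, g i ≠ 0 → v (g i • m i) = v (m i) := fun i hi => by
    rw [Algebra.smul_def, v.map_mul, hk _ hi, zero_add]
  have hjtop : v (m j) ≠ ⊤ := v.ne_top_iff.mpr (hm j)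
  have hrest : v (m j) < v (∑ i ∈ s.erase j, g i • m i) := by
    refine v.map_lt_sum hjtop fun i hi => ?_
    obtain ⟨hij, his⟩ := mem_erase.mp hi
    by_cases hgi : g i = 0
    · simpa [hgi] using hjtop.lt_top
    · rw [hval i hgi]
      exact (hjmin i (mem_filter.mpr ⟨his, hgi⟩)).lt_of_ne fun h => hij (hinj h).symm
  have hsum_val : v (∑ i ∈ s, g i • m i) = v (m j) := by
    rw [← add_sum_erase s _ hj.1, v.map_add_eq_of_lt_left (by rwa [hval j hj.2]), hval j hj.2]
  rw [hsum, v.map_zero] at hsum_val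
  exact hjtop hsum_val.symm

theorem natCard_pow_ncard_image_le {F K Γ : Type*} [Field F] [Finite F] [Field K]
    [Algebra F K] [AddCommGroup Γ] [LinearOrder Γ] [IsOrderedAddMonoid Γ]
    (v : AddValuation K (WithTop Γ)) (W : Submodule F K) [Finite W] :
    Nat.card F ^ (v '' ((W : Set K) \ {0})).ncard ≤ Nat.card W := by
  have : Finite (v '' ((W : Set K) \ {0})) := ((W : Set K).toFinite.sdiff).image v
  choose m hmW hmv using fun γ : v '' ((W : Set K) \ {0}) => γ.2
  have hlin : LinearIndependent F m :=
    v.linearIndependent_of_injective (fun _ hc => v.map_algebraMap_eq_zero hc) (fun γ => (hmW γ).2)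
      fun γ δ h => Subtype.ext (by simpa only [Function.comp_apply, hmv] using h)
  have hlinW : LinearIndependent F fun γ => (⟨m γ, (hmW γ).1⟩ : W) := .of_comp W.subtype hlin
  rw [← Nat.card_coe_set_eq]
  exact hlinW.natCard_pow_le

end AddValuation

namespace ValuedFieldAux

variable {K : Type*} [Field K] {Γ : Type*} [AddCommGroup Γ] [LinearOrder Γ] [IsOrderedAddMonoid Γ]
  (vf : ValuedFieldAux K Γ)

theorem v_one : vf.v 1 = 0 := by
  obtain ⟨γ, hγ⟩ := WithTop.ne_top_iff_exists.mp fun h => one_ne_zero ((vf.v_eq_top_iff 1).mp h)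
  have h := vf.v_mul 1 1
  rw [one_mul, ← hγ, ← WithTop.coe_add, WithTop.coe_eq_coe] at h
  rw [← hγ, WithTop.coe_eq_zero]
  exact left_eq_add.mp h

def toAddValuation : AddValuation K (WithTop Γ) :=
  AddValuation.of vf.v ((vf.v_eq_top_iff 0).mpr rfl) vf.v_one vf.v_add vf.v_mul

end ValuedFieldAux

section AdditivePolynomial

variable {K : Type*} [Field K] (p : ℕ) (a : ℕ → K) (d : ℕ)

noncomputable def additivePolynomial : K[X] := ∑ i ∈ range (d + 1), C (a i) * X ^ p ^ i

def additivePolynomialHom [ExpChar K p] : K →+ K :=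
  ∑ i ∈ range (d + 1), (AddMonoidHom.mulLeft (a i)).comp (iterateFrobenius K p i).toAddMonoidHom

variable {p a d}

theorem coeff_additivePolynomial_pow (hp : p.Prime) :
    (additivePolynomial p a d).coeff (p ^ d) = a d := by
  rw [additivePolynomial, finsetSum_coeff, sum_eq_single d]
  · simp
  · intro i _ hid
    rw [coeff_C_mul_X_pow, if_neg fun h => hid (Nat.pow_right_injective hp.two_le h).symm]
  · simp

theorem additivePolynomial_ne_zero (hp : p.Prime) (had : a d ≠ 0) :
    additivePolynomial p a d ≠ 0 := fun h =>
  had (by rw [← coeff_additivePolynomial_pow (a := a) hp, h, coeff_zero])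

theorem natDegree_additivePolynomial_le (hp : 0 < p) :
    (additivePolynomial p a d).natDegree ≤ p ^ d := by
  refine natDegree_sum_le_of_forall_le _ _ fun i hi => (natDegree_C_mul_X_pow_le _ _).trans ?_
  exact Nat.pow_le_pow_right hp (Nat.lt_succ_iff.mp (mem_range.mp hi))

variable [ExpChar K p]

theorem additivePolynomialHom_apply (x : K) :
    additivePolynomialHom p a d x = ∑ i ∈ range (d + 1), a i * x ^ p ^ i := by
  simp [additivePolynomialHom, iterateFrobenius_def]

theorem eval_additivePolynomial (x : K) :
    (additivePolynomial p a d).eval x = additivePolynomialHom p a d x := by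
  simp [additivePolynomial, additivePolynomialHom_apply, eval_finsetSum]

theorem coe_ker_additivePolynomialHom_subset_rootSet (hp : p.Prime) (had : a d ≠ 0) :
    ((additivePolynomialHom p a d).ker : Set K) ⊆ (additivePolynomial p a d).rootSet K :=
  fun x hx => by
    simpa [mem_rootSet, additivePolynomial_ne_zero hp had, eval_additivePolynomial] using hx

theorem finite_ker_additivePolynomialHom (hp : p.Prime) (had : a d ≠ 0) :
    Finite (additivePolynomialHom p a d).ker :=
  ((additivePolynomial p a d).rootSet_finite K).subset
    (coe_ker_additivePolynomialHom_subset_rootSet hp had)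

theorem natCard_ker_additivePolynomialHom_le (hp : p.Prime) (had : a d ≠ 0) :
    Nat.card (additivePolynomialHom p a d).ker ≤ p ^ d := calc
  _ = ((additivePolynomialHom p a d).ker : Set K).ncard := Nat.card_coe_set_eq _
  _ ≤ ((additivePolynomial p a d).rootSet K).ncard :=
    Set.ncard_le_ncard (coe_ker_additivePolynomialHom_subset_rootSet hp had)
      ((additivePolynomial p a d).rootSet_finite K)
  _ ≤ (additivePolynomial p a d).natDegree := ncard_rootSet_le _ _
  _ ≤ p ^ d := natDegree_additivePolynomial_le hp.pos

end AdditivePolynomial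

theorem stmt_11_general (p : ℕ) (hp : p.Prime) (K : Type*) [Field K] [CharP K p]
    (Γ : Type*) [AddCommGroup Γ] [LinearOrder Γ] [IsOrderedAddMonoid Γ] (vf : ValuedFieldAux K Γ)
    (d : ℕ) (a : ℕ → K) (had : a d ≠ 0) :
    (vf.v '' {m : K | m ≠ 0 ∧ ∑ i ∈ Finset.range (d + 1), a i * m ^ (p ^ i) = 0}).Finite ∧
    (vf.v '' {m : K | m ≠ 0 ∧ ∑ i ∈ Finset.range (d + 1), a i * m ^ (p ^ i) = 0}).ncard
      ≤ 2 ^ (d - 1) := by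
  have : Fact p.Prime := ⟨hp⟩
  let := ZMod.algebra K p
  set W := AddSubgroup.toZModSubmodule p (additivePolynomialHom p a d).ker
  have hW : {m : K | m ≠ 0 ∧ ∑ i ∈ Finset.range (d + 1), a i * m ^ (p ^ i) = 0} =
      (W : Set K) \ {0} := by
    ext x
    simp [W, additivePolynomialHom_apply, and_comm]
  have : Finite W := finite_ker_additivePolynomialHom hp had
  have hcard := (vf.toAddValuation.natCard_pow_ncard_image_le W).trans
    (natCard_ker_additivePolynomialHom_le hp had)
  rw [Nat.card_zmod, Nat.pow_le_pow_iff_right hp.one_lt] at hcard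
  rw [hW]
  refine ⟨((W : Set K).toFinite.sdiff).image _, hcard.trans ?_⟩
  have := Nat.lt_two_pow_self (n := d - 1)
  omega

/-- Let `(K, v)` be a separably closed valued field of characteristic
`p > 0`, `d ≥ 1`, and `a_0, …, a_d ∈ K` with `a_d ≠ 0`. Then the set of valuations of
nonzero roots of the additive polynomial `∑ a_i·x^{p^i}` has at most `2^{d−1}`
elements. -/
theorem stmt_11 (p : ℕ) (hp : p.Prime) (K : Type*) [Field K] [CharP K p] [IsSepClosed K]
    (Γ : Type*) [AddCommGroup Γ] [LinearOrder Γ] [IsOrderedAddMonoid Γ] (vf : ValuedFieldAux K Γ)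
    (d : ℕ) (hd : 1 ≤ d) (a : ℕ → K) (had : a d ≠ 0) :
    (vf.v '' {m : K | m ≠ 0 ∧ ∑ i ∈ Finset.range (d + 1), a i * m ^ (p ^ i) = 0}).Finite ∧
    (vf.v '' {m : K | m ≠ 0 ∧ ∑ i ∈ Finset.range (d + 1), a i * m ^ (p ^ i) = 0}).ncard
      ≤ 2 ^ (d - 1) :=
  stmt_11_general p hp K Γ vf d a had
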